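/- Let α ≥ β > 1, C₁ > C₂ > 0, and let h : [0,∞) → ℝ be a nonnegative absolutely continuous function satisfying h'(t) + C₁·min(h(t)^α, h(t)^β) ≤ C₂ for a.e. t > 0. If h(0) > (C₂/C₁)^{1/α}, then for all t ≥ 0, h(t) ≤ (C₂/C₁)^{1/α} + [ (h(0) − (C₂/C₁)^{1/α})^{1−β} + C₁ (C₂/C₁)^{(α−β)/(α−β+1)} (β−1) t ]^{1/(1−β)}. -/

import Mathlib

open MeasureTheory Set
open scoped Topology

/-!
Put `ε = (C₂/C₁)^(1/α)` and `K = C₁ (C₂/C₁)^((α-β)/(α-β+1))`. Since `C₁ ε^α = C₂`,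
superadditivity of `y ↦ y^β` (`β ≥ 1`) gives `C₂ - C₁ min (y^α, y^β) ≤ -K (y - ε)^β` for `y ≥ ε`,
so `h` is a subsolution of `y' = -K (y - ε)^β` as long as it stays above `ε`. The right-hand side
of the claim is `ε + u(t)`, where `u(t) = (u(0)^(1-β) + K (β-1) t)^(1/(1-β))` solves `u' = -K u^β`
with `u(0) = h(0) - ε`. The fencing theorem, applied to the integral form of the differential
inequality, gives `h ≤ ε + u + δ` for every `δ > 0`.
-/

namespace Real

lemma rpow_sub_mul_rpow_le_min_rpow {ε x α β : ℝ} (hε : 0 < ε) (hε1 : ε ≤ 1) (hεx : ε ≤ x)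
    (hβα : β ≤ α) : ε ^ (α - β) * x ^ β ≤ min (x ^ α) (x ^ β) := by
  have hx : 0 < x := hε.trans_le hεx
  rcases le_total x 1 with hx1 | hx1
  · rw [min_eq_left (rpow_le_rpow_of_exponent_ge hx hx1 hβα)]
    calc ε ^ (α - β) * x ^ β ≤ x ^ (α - β) * x ^ β := by gcongr
      _ = x ^ α := by rw [← rpow_add hx, sub_add_cancel]
  · rw [min_eq_right (rpow_le_rpow_of_exponent_le hx1 hβα)]
    exact mul_le_of_le_one_left (by positivity) (rpow_le_one hε.le hε1 (by linarith))

lemma rpow_sub_mul_sub_rpow_le_min_rpow_sub {ε x α β : ℝ} (hε : 0 < ε) (hε1 : ε ≤ 1)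
    (hεx : ε ≤ x) (hβ : 1 ≤ β) (hβα : β ≤ α) :
    ε ^ (α - β) * (x - ε) ^ β ≤ min (x ^ α) (x ^ β) - ε ^ α := by
  have hsuper : (x - ε) ^ β + ε ^ β ≤ x ^ β := by
    simpa using add_rpow_le_rpow_add (sub_nonneg.2 hεx) hε.le hβ
  have hεα : ε ^ (α - β) * ε ^ β = ε ^ α := by rw [← rpow_add hε, sub_add_cancel]
  have := rpow_sub_mul_rpow_le_min_rpow hε hε1 hεx hβα
  linarith [mul_le_mul_of_nonneg_left hsuper (rpow_nonneg hε.le (α - β))]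

lemma rpow_div_sub_add_one_le_rpow_one_div_rpow {r α β : ℝ} (hr : 0 < r) (hr1 : r ≤ 1)
    (hβ : 1 ≤ β) (hβα : β ≤ α) : r ^ ((α - β) / (α - β + 1)) ≤ (r ^ (1 / α)) ^ (α - β) := by
  have hα : 0 < α := by linarith
  rw [← rpow_mul hr.le, one_div_mul_eq_div]
  exact rpow_le_rpow_of_exponent_ge hr hr1 <|
    div_le_div_of_nonneg_left (by linarith) (by linarith) (by linarith)

end Real

lemma sub_mul_min_rpow_le_neg_mul_rpow {C₁ C₂ α β y : ℝ} (hC₂ : 0 < C₂) (hC : C₂ ≤ C₁)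
    (hβ : 1 ≤ β) (hβα : β ≤ α) (hy : (C₂ / C₁) ^ (1 / α) ≤ y) :
    C₂ - C₁ * min (y ^ α) (y ^ β) ≤
      -(C₁ * (C₂ / C₁) ^ ((α - β) / (α - β + 1))) * (y - (C₂ / C₁) ^ (1 / α)) ^ β := by
  have hC₁ : 0 < C₁ := hC₂.trans_le hC
  have hr : 0 < C₂ / C₁ := div_pos hC₂ hC₁
  have hr1 : C₂ / C₁ ≤ 1 := (div_le_one hC₁).2 hC
  have hα : 0 < α := by linarith
  set ε := (C₂ / C₁) ^ (1 / α)
  have hε : 0 < ε := Real.rpow_pos_of_pos hr _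
  have hεα : C₂ = C₁ * ε ^ α := by
    rw [← Real.rpow_mul hr.le, one_div_mul_cancel (by linarith), Real.rpow_one]
    field_simp
  have hkey := Real.rpow_sub_mul_sub_rpow_le_min_rpow_sub hε
    (Real.rpow_le_one hr.le hr1 (by positivity)) hy hβ hβα
  have hθ := Real.rpow_div_sub_add_one_le_rpow_one_div_rpow hr hr1 hβ hβα
  have hyε : 0 ≤ (y - ε) ^ β := Real.rpow_nonneg (sub_nonneg.2 hy) _
  have := (mul_le_mul_of_nonneg_right hθ hyε).trans hkey
  linarith [mul_le_mul_of_nonneg_left this hC₁.le]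

lemma continuousOn_Icc_of_sub_eq_integral {f f' : ℝ → ℝ} {a b : ℝ} (hab : a ≤ b)
    (hf' : IntervalIntegrable f' volume a b) (hf : ∀ x ∈ Icc a b, f x - f a = ∫ τ in a..x, f' τ) :
    ContinuousOn f (Icc a b) := by
  have hprim := intervalIntegral.continuousOn_primitive_interval' hf' left_mem_uIcc
  rw [uIcc_of_le hab] at hprim
  exact (continuousOn_const (c := f a)).add hprim |>.congr fun x hx => eq_add_of_sub_eq' (hf x hx)

lemma sub_le_integral_of_ae_le {f f' g : ℝ → ℝ} {s t : ℝ} (hst : s ≤ t)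
    (hf : f t - f s = ∫ τ in s..t, f' τ) (hf' : IntervalIntegrable f' volume s t)
    (hg : IntervalIntegrable g volume s t) (hle : ∀ᵐ τ ∂volume.restrict (Ioc s t), f' τ ≤ g τ) :
    f t - f s ≤ ∫ τ in s..t, g τ := by
  rw [hf, intervalIntegral.integral_of_le hst, intervalIntegral.integral_of_le hst]
  exact setIntegral_mono_ae_restrict hf'.1 hg.1 hle

lemma frequently_slope_lt_of_sub_le_integral {f g : ℝ → ℝ} {a b x r : ℝ} (hx : x ∈ Ico a b)
    (hg : ContinuousOn g (Icc a b)) (hfg : ∀ z ∈ Icc x b, f z - f x ≤ ∫ τ in x..z, g τ)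
    (hr : g x < r) : ∃ᶠ z in 𝓝[>] x, slope f x z < r := by
  -- needed for the `FTCFilter x (𝓝[Icc a b] x) (𝓝[Icc a b] x)` instance
  have : Fact (x ∈ Icc a b) := ⟨Ico_subset_Icc_self hx⟩
  have hΦ : HasDerivWithinAt (fun z => ∫ τ in x..z, g τ) (g x) (Ici x) x :=
    (intervalIntegral.integral_hasDerivWithinAt_right (s := Icc a b) (t := Icc a b)
      IntervalIntegrable.refl (hg.stronglyMeasurableAtFilter_nhdsWithin measurableSet_Icc x)
      (hg x (Ico_subset_Icc_self hx))).mono_of_mem_nhdsWithin (Icc_mem_nhdsGE_of_mem hx)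
  refine (hΦ.liminf_right_slope_le hr).mp ?_
  filter_upwards [Ioc_mem_nhdsGT hx.2] with z hz hslope
  refine lt_of_le_of_lt ?_ hslope
  simp only [slope_def_field, intervalIntegral.integral_same, sub_zero]
  gcongr
  · linarith [hz.1]
  · exact hfg z ⟨hz.1.le, hz.2⟩

lemma le_of_sub_le_integral_of_deriv_boundary {f g B B' : ℝ → ℝ} {a b : ℝ}
    (hf : ContinuousOn f (Icc a b)) (hg : ContinuousOn g (Icc a b))
    (hfg : ∀ x ∈ Icc a b, ∀ z ∈ Icc x b, f z - f x ≤ ∫ τ in x..z, g τ) (ha : f a ≤ B a)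
    (hB : ContinuousOn B (Icc a b)) (hB' : ∀ x ∈ Ico a b, HasDerivWithinAt B (B' x) (Ici x) x)
    (bound : ∀ x ∈ Ico a b, f x = B x → g x < B' x) : ∀ ⦃x⦄, x ∈ Icc a b → f x ≤ B x :=
  image_le_of_liminf_slope_right_lt_deriv_boundary' hf
    (fun x hx _ hr =>
      frequently_slope_lt_of_sub_le_integral hx hg (hfg x (Ico_subset_Icc_self hx)) hr)
    ha hB hB' bound

lemma hasDerivAt_rpow_one_div_one_sub {β c K t : ℝ} (hβ : β ≠ 1)
    (ht : 0 < c + K * (β - 1) * t) :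
    HasDerivAt (fun s => (c + K * (β - 1) * s) ^ (1 / (1 - β)))
      (-K * ((c + K * (β - 1) * t) ^ (1 / (1 - β))) ^ β) t := by
  have h1β : 1 - β ≠ 0 := sub_ne_zero.2 hβ.symm
  have hlin : HasDerivAt (fun s => c + K * (β - 1) * s) (K * (β - 1)) t := by
    simpa using ((hasDerivAt_id t).const_mul (K * (β - 1))).const_add c
  refine ((Real.hasDerivAt_rpow_const (Or.inl ht.ne')).comp t hlin).congr_deriv ?_
  have hexp : 1 / (1 - β) * β = 1 / (1 - β) - 1 := by field_simp; ring
  rw [← Real.rpow_mul ht.le, hexp]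
  field_simp
  ring

lemma le_add_rpow_of_sub_le_integral {f g : ℝ → ℝ} {ε K β T : ℝ} (hβ : 1 < β) (hK : 0 < K)
    (hT : 0 ≤ T) (hf : ContinuousOn f (Icc 0 T)) (hg : ContinuousOn g (Icc 0 T))
    (hfg : ∀ x ∈ Icc 0 T, ∀ z ∈ Icc x T, f z - f x ≤ ∫ τ in x..z, g τ) (hε : ε < f 0)
    (hgf : ∀ x ∈ Icc 0 T, ε ≤ f x → g x ≤ -K * (f x - ε) ^ β) :
    f T ≤ ε + ((f 0 - ε) ^ (1 - β) + K * (β - 1) * T) ^ (1 / (1 - β)) := by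
  set u : ℝ → ℝ := fun s => ((f 0 - ε) ^ (1 - β) + K * (β - 1) * s) ^ (1 / (1 - β))
  have hu_base : ∀ s, 0 ≤ s → 0 < (f 0 - ε) ^ (1 - β) + K * (β - 1) * s := fun s hs => by
    have := Real.rpow_pos_of_pos (sub_pos.2 hε) (1 - β)
    have : 0 ≤ K * (β - 1) * s := mul_nonneg (mul_nonneg hK.le (by linarith)) hs
    linarith
  have hu0 : u 0 = f 0 - ε := by
    simp only [u, mul_zero, add_zero]
    rw [← Real.rpow_mul (sub_pos.2 hε).le, mul_one_div_cancel (by linarith), Real.rpow_one]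
  have hu' : ∀ s, 0 ≤ s → HasDerivAt u (-K * u s ^ β) s := fun s hs =>
    hasDerivAt_rpow_one_div_one_sub hβ.ne' (hu_base s hs)
  -- At a contact point `f - ε = u + δ > u ≥ 0`, so `g < (ε + u + δ)'` strictly.
  refine le_of_forall_pos_le_add fun δ hδ => ?_
  refine le_of_sub_le_integral_of_deriv_boundary (B := fun s => ε + u s + δ)
    (B' := fun s => -K * u s ^ β) hf hg hfg (by simp only [hu0]; linarith)
    (fun s hs => ((hu' s hs.1).continuousAt.continuousWithinAt.const_add ε).add_const δ)
    (fun s hs => (((hu' s hs.1).const_add ε).add_const δ).hasDerivWithinAt)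
    (fun x hx hcontact => ?_) (right_mem_Icc.2 hT)
  have hux : 0 ≤ u x := (Real.rpow_pos_of_pos (hu_base x hx.1) _).le
  have : u x ^ β < (f x - ε) ^ β := Real.rpow_lt_rpow hux (by linarith) (by linarith)
  linarith [hgf x (Ico_subset_Icc_self hx) (by linarith), mul_lt_mul_of_pos_left this hK]

theorem stmt_4_general (α β C₁ C₂ : ℝ) (hβ : 1 < β) (hαβ : β ≤ α)
    (hC₂ : 0 < C₂) (hC : C₂ < C₁)
    (h h' : ℝ → ℝ)
    (hFTC : ∀ s t : ℝ, 0 ≤ s → s ≤ t → h t - h s = ∫ τ in s..t, h' τ)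
    (hInt : ∀ s t : ℝ, 0 ≤ s → s ≤ t → IntervalIntegrable h' volume s t)
    (hineq : ∀ᵐ t ∂(volume.restrict (Set.Ioi (0:ℝ))),
      h' t + C₁ * min (h t ^ α) (h t ^ β) ≤ C₂)
    (h0 : (C₂ / C₁) ^ (1 / α) < h 0) :
    ∀ t : ℝ, 0 ≤ t →
      h t ≤ (C₂ / C₁) ^ (1 / α) +
        ((h 0 - (C₂ / C₁) ^ (1 / α)) ^ (1 - β) +
          C₁ * (C₂ / C₁) ^ ((α - β) / (α - β + 1)) * (β - 1) * t) ^ (1 / (1 - β)) := by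
  intro t ht
  have hC₁ : 0 < C₁ := hC₂.trans hC
  have hh : ContinuousOn h (Icc 0 t) :=
    continuousOn_Icc_of_sub_eq_integral ht (hInt 0 t le_rfl ht) fun x hx => hFTC 0 x le_rfl hx.1
  have hg : ContinuousOn (fun τ => C₂ - C₁ * min (h τ ^ α) (h τ ^ β)) (Icc 0 t) :=
    continuousOn_const.sub <| continuousOn_const.mul <|
      ((Real.continuous_rpow_const (by linarith)).min
        (Real.continuous_rpow_const (by linarith))).comp_continuousOn hh
  refine le_add_rpow_of_sub_le_integral hβ (by positivity) ht hh hg (fun x hx z hz => ?_) h0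
    fun x _ hx => sub_mul_min_rpow_le_neg_mul_rpow hC₂ hC.le hβ.le hαβ hx
  exact sub_le_integral_of_ae_le hz.1 (hFTC x z hx.1 hz.1) (hInt x z hx.1 hz.1)
    ((hg.mono (Icc_subset_Icc hx.1 hz.2)).intervalIntegrable_of_Icc hz.1)
    (ae_restrict_of_ae_restrict_of_subset (Ioc_subset_Ioi_self.trans (Ioi_subset_Ioi hx.1))
      (hineq.mono fun τ hτ => by linarith))

/-- Lemma 5.2(2), case `β > 1`: decay estimate when `C₁ > C₂ > 0` and
`h 0 > (C₂/C₁)^(1/α)`. -/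
theorem stmt_4 (α β C₁ C₂ : ℝ) (hβ : 1 < β) (hαβ : β ≤ α)
    (hC₂ : 0 < C₂) (hC : C₂ < C₁)
    (h h' : ℝ → ℝ)
    (hnn : ∀ t : ℝ, 0 ≤ t → 0 ≤ h t)
    (hFTC : ∀ s t : ℝ, 0 ≤ s → s ≤ t → h t - h s = ∫ τ in s..t, h' τ)
    (hInt : ∀ s t : ℝ, 0 ≤ s → s ≤ t → IntervalIntegrable h' volume s t)
    (hineq : ∀ᵐ t ∂(volume.restrict (Set.Ioi (0:ℝ))),
      h' t + C₁ * min (h t ^ α) (h t ^ β) ≤ C₂)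
    (h0 : (C₂ / C₁) ^ (1 / α) < h 0) :
    ∀ t : ℝ, 0 ≤ t →
      h t ≤ (C₂ / C₁) ^ (1 / α) +
        ((h 0 - (C₂ / C₁) ^ (1 / α)) ^ (1 - β) +
          C₁ * (C₂ / C₁) ^ ((α - β) / (α - β + 1)) * (β - 1) * t) ^ (1 / (1 - β)) :=
  stmt_4_general α β C₁ C₂ hβ hαβ hC₂ hC h h' hFTC hInt hineq h0
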